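/- Fix a real number p with 0 < p < 1/2. For every k ∈ ℕ, every state (a,b) with a ≤ b+1, and every c ∈ ℕ: g_k(a+c, b+c) − g_k(a,b) ≤ c · (p/(1−p))^{1+b−a}. -/

import Mathlib

/-- The strategic miner's optimal expected gain over `k` levels in the
immediate-release game, starting from the state where his branch has length `a`
and the honest miners' branch has length `b` (meaningful for `a ≤ b + 1`).
We have `gain p 0 a b = 0`; for `k ≥ 1`, at a winning state (`a = b + 1`) the
miner is paid `b + 1` and the game restarts at `(0,0)` one level later;
otherwise he may capitulate to any state `(0, s)` with `s < b` (taking the best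
such option) or keep mining, in which case he advances to `(a+1, b)` with
probability `p` and the honest miners advance to `(a, b+1)` (one level deeper)
with probability `1 - p`. -/
noncomputable def gain (p : ℝ) : ℕ → ℕ → ℕ → ℝ
  | 0, _, _ => 0
  | k + 1, a, b =>
    if h : b + 1 ≤ a then
      gain p k 0 0 + (b + 1 : ℕ)
    else
      ((List.range b).attach.map (fun s => gain p (k + 1) 0 s.1)).foldr max
        (p * gain p (k + 1) (a + 1) b + (1 - p) * gain p k a (b + 1))
termination_by k a b => (k, b, b + 1 - a)
decreasing_by
  all_goals
    first
      | exact Prod.Lex.left _ _ (Nat.lt_succ_self _)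
      | exact Prod.Lex.right _ (Prod.Lex.right _ (by omega))
      | exact Prod.Lex.right _ (Prod.Lex.left _ _ (List.mem_range.mp s.2))

/-!
Prove a stronger, two-state statement by well-founded induction along the recursion
defining `gain`: the gain at `(α, β)` exceeds the gain at any state `(a, b)` with `b ≤ β`
and `a - b ≥ α - β` by at most `w · ρ^(1+b-a)`, where `ρ = p/(1-p)` and the weight `w`
is at least the shift `β - b`. Each option at `(α, β)` is matched with the same option at
`(a, b)`. Mining keeps the exponent in balance because `p ρ^e + (1-p) ρ^(e+2) = ρ^(e+1)`;
capitulating to `(0, s)` with `s ≥ b` is itself a shifted state; and at a winning base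
state `(b+1, b)` the restart is absorbed using `p ≤ 1 - p`.
-/

theorem List.foldr_max_le_iff {α : Type*} [LinearOrder α] {l : List α} {x z : α} :
    l.foldr max x ≤ z ↔ x ≤ z ∧ ∀ y ∈ l, y ≤ z := by
  induction l with
  | nil => simp
  | cons y l ih => simp [ih, and_left_comm]

section

variable {p : ℝ}

lemma gain_zero (a b : ℕ) : gain p 0 a b = 0 := by
  rw [gain]

lemma gain_succ_win (k b : ℕ) : gain p (k + 1) (b + 1) b = gain p k 0 0 + (b + 1) := by
  rw [gain, dif_pos le_rfl]
  push_cast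
  ring

lemma gain_succ_le_iff {k a b : ℕ} (h : a ≤ b) {X : ℝ} :
    gain p (k + 1) a b ≤ X ↔
      p * gain p (k + 1) (a + 1) b + (1 - p) * gain p k a (b + 1) ≤ X ∧
        ∀ s < b, gain p (k + 1) 0 s ≤ X := by
  rw [gain, dif_neg (by omega), List.foldr_max_le_iff]
  simp

lemma pow_ratio_average (hp : p ≠ 1) (e : ℕ) :
    p * (p / (1 - p)) ^ e + (1 - p) * (p / (1 - p)) ^ (e + 2) = (p / (1 - p)) ^ (e + 1) := by
  have h1p : 1 - p ≠ 0 := sub_ne_zero.mpr hp.symm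
  have key : p + (1 - p) * (p / (1 - p)) ^ 2 = p / (1 - p) := by
    field_simp
    ring
  rw [pow_add, pow_succ]
  linear_combination (p / (1 - p)) ^ e * key

/-- Off the diagonal of `(a, b)` the weight `w` must exceed the shift `β - b`; this slack
absorbs the restart after a win at `(b + 1, b)`. -/
def GainShiftBound (p : ℝ) (k α β : ℕ) : Prop :=
  ∀ a b w : ℕ, a ≤ b + 1 → b ≤ β → α + b ≤ a + β → β ≤ b + w →
    (α + b < a + β → β < b + w) →
      gain p k α β ≤ gain p k a b + w * (p / (1 - p)) ^ (1 + b - a)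

lemma gainShiftBound_zero (hp0 : 0 ≤ p) (hp1 : p < 1) (α β : ℕ) :
    GainShiftBound p 0 α β := by
  intro a b w _ _ _ _ _
  have : 0 ≤ p / (1 - p) := div_nonneg hp0 (by linarith)
  rw [gain_zero, gain_zero]
  positivity

variable {k α β : ℕ}

lemma gainShiftBound_succ_of_lt (h : β < α) : GainShiftBound p (k + 1) α β := by
  intro a b w hab _ hα hw _
  obtain rfl : α = β + 1 := by omega
  obtain rfl : a = b + 1 := by omega
  rw [gain_succ_win, gain_succ_win, show 1 + b - (b + 1) = 0 by omega, pow_zero, mul_one]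
  have : (β : ℝ) ≤ b + w := by exact_mod_cast hw
  linarith

lemma gain_succ_le_of_le (hp0 : 0 ≤ p) (hp1 : p < 1) (hαβ : α ≤ β)
    (hmine : GainShiftBound p (k + 1) (α + 1) β) (hhonest : GainShiftBound p k α (β + 1))
    (hcap : ∀ s < β, GainShiftBound p (k + 1) 0 s)
    {a b w : ℕ} (hab : a ≤ b) (hb : b ≤ β) (hα : α + b ≤ a + β) (hw : β ≤ b + w)
    (hw' : α + b < a + β → β < b + w) :
    gain p (k + 1) α β ≤ gain p (k + 1) a b + w * (p / (1 - p)) ^ (1 + b - a) := by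
  obtain ⟨e, rfl⟩ := Nat.exists_eq_add_of_le hab
  have hr : 0 ≤ p / (1 - p) := div_nonneg hp0 (by linarith)
  have he : 1 + (a + e) - a = e + 1 := by omega
  have hbase := (gain_succ_le_iff (k := k) (p := p) hab).1 le_rfl
  rw [he]
  refine (gain_succ_le_iff hαβ).2 ⟨?_, fun s hs => ?_⟩
  · have h₁ := hmine (a + 1) (a + e) w (by omega) hb (by omega) hw (by omega)
    have h₂ := hhonest a (a + e + 1) w (by omega) (by omega) (by omega) (by omega) (by omega)
    rw [show 1 + (a + e) - (a + 1) = e by omega] at h₁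
    rw [show 1 + (a + e + 1) - a = e + 2 by omega] at h₂
    have h1p : 0 ≤ 1 - p := by linarith
    calc p * gain p (k + 1) (α + 1) β + (1 - p) * gain p k α (β + 1)
        ≤ p * (gain p (k + 1) (a + 1) (a + e) + w * (p / (1 - p)) ^ e) +
            (1 - p) * (gain p k a (a + e + 1) + w * (p / (1 - p)) ^ (e + 2)) := by
          gcongr
      _ = (p * gain p (k + 1) (a + 1) (a + e) + (1 - p) * gain p k a (a + e + 1)) +
            w * (p * (p / (1 - p)) ^ e + (1 - p) * (p / (1 - p)) ^ (e + 2)) := by ring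
      _ ≤ gain p (k + 1) a (a + e) + w * (p / (1 - p)) ^ (e + 1) := by
          rw [pow_ratio_average hp1.ne]
          linarith [hbase.1]
  · rcases lt_or_ge s (a + e) with hsb | hsb
    · have : 0 ≤ (w : ℝ) * (p / (1 - p)) ^ (e + 1) := by positivity
      linarith [hbase.2 s hsb]
    · simpa only [he] using hcap s hs a (a + e) w (by omega) hsb (by omega) (by omega) (by omega)

lemma gain_succ_le_of_win (hp0 : 0 ≤ p) (hp : p ≤ 1 / 2) (hαβ : α ≤ β)
    (hmine : GainShiftBound p (k + 1) (α + 1) β) (hhonest : GainShiftBound p k α (β + 1))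
    (hcap : ∀ s < β, GainShiftBound p (k + 1) 0 s)
    {b w : ℕ} (hb : b ≤ β) (hw : β < b + w) :
    gain p (k + 1) α β ≤ gain p (k + 1) (b + 1) b + w := by
  have hw' : (β : ℝ) + 1 ≤ b + w := by exact_mod_cast hw
  rw [gain_succ_win]
  refine (gain_succ_le_iff hαβ).2 ⟨?_, fun s hs => ?_⟩
  · have h₁ := hmine (b + 1) b w le_rfl hb (by omega) hw.le (fun _ => hw)
    have h₂ := hhonest 0 0 (β + 2) (by omega) (by omega) (by omega) (by omega) (by omega)
    rw [show 1 + b - (b + 1) = 0 by omega, pow_zero, mul_one, gain_succ_win] at h₁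
    rw [show 1 + 0 - 0 = 1 by rfl, pow_one] at h₂
    have hq : (1 - p) * (p / (1 - p)) = p := mul_div_cancel₀ p (by linarith)
    have h1p : 0 ≤ 1 - p := by linarith
    calc p * gain p (k + 1) (α + 1) β + (1 - p) * gain p k α (β + 1)
        ≤ p * (gain p k 0 0 + (b + 1) + w) +
            (1 - p) * (gain p k 0 0 + ((β + 2 : ℕ) : ℝ) * (p / (1 - p))) := by
          gcongr
      _ = gain p k 0 0 + p * ((b + 1 + w) + (β + 2)) := by
          push_cast
          linear_combination (↑β + 2) * hq
      _ ≤ gain p k 0 0 + (b + 1) + w := by nlinarith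
  · have h := hcap s hs (s + 1) s 1 le_rfl le_rfl (by omega) (by omega) (by omega)
    rw [show 1 + s - (s + 1) = 0 by omega, pow_zero, gain_succ_win] at h
    have : (s : ℝ) + 1 ≤ β := by exact_mod_cast hs
    push_cast at h
    linarith

lemma GainShiftBound.succ (hp0 : 0 ≤ p) (hp : p ≤ 1 / 2) (hαβ : α ≤ β)
    (hmine : GainShiftBound p (k + 1) (α + 1) β) (hhonest : GainShiftBound p k α (β + 1))
    (hcap : ∀ s < β, GainShiftBound p (k + 1) 0 s) :
    GainShiftBound p (k + 1) α β := by
  intro a b w hab hb hα hw hw'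
  rcases le_or_gt a b with hab' | hba
  · exact gain_succ_le_of_le hp0 (by linarith) hαβ hmine hhonest hcap hab' hb hα hw hw'
  · obtain rfl : a = b + 1 := by omega
    rw [show 1 + b - (b + 1) = 0 by omega, pow_zero, mul_one]
    exact gain_succ_le_of_win hp0 hp hαβ hmine hhonest hcap hb (hw' (by omega))

theorem gainShiftBound (hp0 : 0 ≤ p) (hp : p ≤ 1 / 2) : ∀ k α β, GainShiftBound p k α β
  | 0, α, β => gainShiftBound_zero hp0 (by linarith) α β
  | k + 1, α, β =>
    if hαβ : α ≤ β then
      GainShiftBound.succ hp0 hp hαβ (gainShiftBound hp0 hp (k + 1) (α + 1) β)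
        (gainShiftBound hp0 hp k α (β + 1)) (fun s _ => gainShiftBound hp0 hp (k + 1) 0 s)
    else gainShiftBound_succ_of_lt (by omega)
termination_by k α β => (k, β, β + 1 - α)
decreasing_by
  · exact Prod.Lex.right _ (Prod.Lex.right _ (by omega))
  · exact Prod.Lex.left _ _ (Nat.lt_succ_self _)
  · exact Prod.Lex.right _ (Prod.Lex.left _ _ (by assumption))

end

/-- For every `k`, every state `(a, b)` with `a ≤ b + 1`, and every shift
`c ∈ ℕ`: `g_k(a+c, b+c) − g_k(a,b) ≤ c·(p/(1−p))^{1+b−a}`. -/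
theorem gain_shift_bound (p : ℝ) (hp0 : 0 < p) (hp : p < 1 / 2) :
    ∀ (k a b c : ℕ), a ≤ b + 1 →
      gain p k (a + c) (b + c) - gain p k a b
        ≤ (c : ℝ) * (p / (1 - p)) ^ (1 + b - a) := by
  intro k a b c hab
  have := gainShiftBound hp0.le hp.le k (a + c) (b + c) a b c hab (by omega) (by omega) le_rfl
    (by omega)
  linarith
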